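/- For any two probability distributions D and D' on a common measurable space, the Jensen–Shannon divergence satisfies D_JS(D, D') ≤ (1/2) ‖D − D'‖₁, where ‖D − D'‖₁ is the L1 (total variation, times two) distance between the distributions. -/

import Mathlib

/-!
Put `s = p + q` and `t = p / s`. The summand `p log₂ (2p / s) + q log₂ (2q / s)` of `2 D_JS` equals
`s (1 - h(t) / log 2)`, where `h` is the binary entropy in nats, while `|p - q| = s |2t - 1|`.
Since `h` is concave with `h 0 = h 1 = 0` and `h (1/2) = log 2`, it lies above the tent
`(1 - |2t - 1|) log 2`, which is exactly the pointwise inequality; summing it gives the claim.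
The series converge because each Kullback–Leibler summand is bounded in absolute value by `p + q`.
-/

open scoped ENNReal

/-- Kullback–Leibler divergence (base-2 logarithm) between two mass functions,
with the usual conventions `0 log 0 = 0`. -/
noncomputable def klFun {α : Type*} (P Q : α → ℝ≥0∞) : ℝ :=
  ∑' a, (P a).toReal * Real.logb 2 ((P a).toReal / (Q a).toReal)

/-- Jensen–Shannon divergence (base-2 logarithm):
`D_JS(P, Q) = (1/2) D_KL(P ‖ M) + (1/2) D_KL(Q ‖ M)` where `M = (P + Q)/2`. -/
noncomputable def jsFun {α : Type*} (P Q : α → ℝ≥0∞) : ℝ :=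
  (klFun P (fun a => (P a + Q a) / 2) + klFun Q (fun a => (P a + Q a) / 2)) / 2

namespace Real

lemma two_mul_mul_log_two_le_binEntropy {t : ℝ} (ht₀ : 0 ≤ t) (ht : t ≤ 2⁻¹) :
    2 * t * log 2 ≤ binEntropy t := by
  have h := strictConcave_binEntropy.concaveOn.2 (show (0 : ℝ) ∈ Set.Icc 0 1 by simp)
    (show (2⁻¹ : ℝ) ∈ Set.Icc 0 1 by norm_num) (show 0 ≤ 1 - 2 * t by linarith)
    (show 0 ≤ 2 * t by linarith) (by ring)
  simpa [show 2 * t * 2⁻¹ = t by ring] using h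

lemma one_sub_abs_mul_log_two_le_binEntropy {t : ℝ} (ht₀ : 0 ≤ t) (ht₁ : t ≤ 1) :
    (1 - |2 * t - 1|) * log 2 ≤ binEntropy t := by
  rcases le_total t 2⁻¹ with ht | ht
  · rw [abs_of_nonpos (by linarith)]
    linarith [two_mul_mul_log_two_le_binEntropy ht₀ ht]
  · rw [abs_of_nonneg (by linarith), ← binEntropy_one_sub]
    linarith [two_mul_mul_log_two_le_binEntropy (t := 1 - t) (by linarith) (by linarith)]

lemma mul_log_two_mul (t : ℝ) : t * log (2 * t) = t * log 2 + t * log t := by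
  rcases eq_or_ne t 0 with rfl | ht
  · simp
  · rw [log_mul two_ne_zero ht, mul_add]

lemma mul_logb_two_mul_add_mul_logb_two_mul_one_sub (t : ℝ) :
    t * logb 2 (2 * t) + (1 - t) * logb 2 (2 * (1 - t)) = 1 - binEntropy t / log 2 := by
  have hlog2 : log 2 ≠ 0 := (log_pos one_lt_two).ne'
  simp only [logb, binEntropy_eq_negMulLog_add_negMulLog_one_sub, negMulLog, mul_div_assoc']
  rw [mul_log_two_mul, mul_log_two_mul]
  field_simp
  ring

lemma abs_mul_logb_div_le {p m : ℝ} (hp : 0 ≤ p) (hpm : p ≤ 2 * m) :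
    |p * logb 2 (p / m)| ≤ 2 * m := by
  rcases hp.eq_or_lt with rfl | hp
  · simpa using hpm
  have hm : 0 < m := by linarith
  have hlog2 : 1 / 2 < log 2 := by linarith [log_two_gt_d9]
  rw [abs_le]
  constructor
  · have hlog : 1 - m / p ≤ log (p / m) := by
      simpa using one_sub_inv_le_log_of_pos (div_pos hp hm)
    have hmul_log : p - m ≤ p * log (p / m) := by
      calc p - m = p * (1 - m / p) := by field_simp
        _ ≤ p * log (p / m) := by gcongr
    rw [logb, mul_div_assoc', le_div_iff₀ (by linarith)]
    nlinarith
  · have hlogb : logb 2 (p / m) ≤ 1 := by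
      rw [← logb_self_eq_one one_lt_two]
      exact logb_le_logb_of_le one_lt_two (div_pos hp hm) ((div_le_iff₀ hm).2 (by linarith))
    nlinarith

end Real

open Real

lemma mul_logb_div_midpoint_add_le_abs_sub {p q : ℝ} (hp : 0 ≤ p) (hq : 0 ≤ q) :
    p * logb 2 (p / ((p + q) / 2)) + q * logb 2 (q / ((p + q) / 2)) ≤ |p - q| := by
  rcases (add_nonneg hp hq).eq_or_lt with hpq | hpq
  · obtain ⟨rfl, rfl⟩ : p = 0 ∧ q = 0 := ⟨by linarith, by linarith⟩
    simp
  obtain ⟨s, t, hs, ht₀, ht₁, rfl, rfl⟩ :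
      ∃ s t : ℝ, 0 < s ∧ 0 ≤ t ∧ t ≤ 1 ∧ p = s * t ∧ q = s * (1 - t) :=
    ⟨p + q, p / (p + q), hpq, by positivity, (div_le_one hpq).2 (by linarith), by field_simp,
      by field_simp; ring⟩
  have h2t : s * t / ((s * t + s * (1 - t)) / 2) = 2 * t := by field_simp; ring
  have h2t' : s * (1 - t) / ((s * t + s * (1 - t)) / 2) = 2 * (1 - t) := by field_simp; ring
  have hH := one_sub_abs_mul_log_two_le_binEntropy ht₀ ht₁
  calc s * t * logb 2 (s * t / ((s * t + s * (1 - t)) / 2))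
        + s * (1 - t) * logb 2 (s * (1 - t) / ((s * t + s * (1 - t)) / 2))
      = s * (1 - binEntropy t / log 2) := by
        rw [h2t, h2t', ← mul_logb_two_mul_add_mul_logb_two_mul_one_sub]
        ring
    _ ≤ s * |2 * t - 1| := by
        gcongr
        rw [sub_le_comm, le_div_iff₀ (log_pos one_lt_two)]
        linarith
    _ = |s * t - s * (1 - t)| := by
        rw [show s * t - s * (1 - t) = s * (2 * t - 1) by ring, abs_mul, abs_of_pos hs]

lemma summable_mul_logb_div_midpoint {α : Type*} {f g : α → ℝ} (hf : ∀ a, 0 ≤ f a)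
    (hg : ∀ a, 0 ≤ g a) (hfs : Summable f) (hgs : Summable g) :
    Summable fun a => f a * logb 2 (f a / ((f a + g a) / 2)) :=
  .of_norm_bounded (hfs.add hgs) fun a => by
    simpa [mul_div_cancel₀] using
      abs_mul_logb_div_le (m := (f a + g a) / 2) (hf a) (by linarith [hg a])

lemma tsum_mul_logb_div_midpoint_add_le_tsum_abs_sub {α : Type*} {f g : α → ℝ}
    (hf : ∀ a, 0 ≤ f a) (hg : ∀ a, 0 ≤ g a) (hfs : Summable f) (hgs : Summable g) :
    ∑' a, f a * logb 2 (f a / ((f a + g a) / 2))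
      + ∑' a, g a * logb 2 (g a / ((f a + g a) / 2)) ≤ ∑' a, |f a - g a| := by
  have hgf := summable_mul_logb_div_midpoint hg hf hgs hfs
  simp only [add_comm (g _) (f _)] at hgf
  have hfg := summable_mul_logb_div_midpoint hf hg hfs hgs
  rw [← hfg.tsum_add hgf]
  exact (hfg.add hgf).tsum_le_tsum (fun a => mul_logb_div_midpoint_add_le_abs_sub (hf a) (hg a))
    (hfs.sub hgs).abs

theorem jsFun_le_half_l1_of_tsum_ne_top {α : Type*} {P Q : α → ℝ≥0∞}
    (hP : ∑' a, P a ≠ ∞) (hQ : ∑' a, Q a ≠ ∞) :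
    jsFun P Q ≤ (1 / 2) * ∑' a, |(P a).toReal - (Q a).toReal| := by
  have hmid (a : α) : ((P a + Q a) / 2).toReal = ((P a).toReal + (Q a).toReal) / 2 := by
    rw [ENNReal.toReal_div, ENNReal.toReal_add (ENNReal.ne_top_of_tsum_ne_top hP a)
      (ENNReal.ne_top_of_tsum_ne_top hQ a), ENNReal.toReal_ofNat]
  simp only [jsFun, klFun, hmid]
  linarith [tsum_mul_logb_div_midpoint_add_le_tsum_abs_sub (fun a => (P a).toReal_nonneg)
    (fun a => (Q a).toReal_nonneg) (ENNReal.summable_toReal hP) (ENNReal.summable_toReal hQ)]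

/-- Lin's lemma: for any two probability distributions `P` and `Q`,
`D_JS(P, Q) ≤ (1/2) ‖P - Q‖₁`. -/
theorem jsFun_le_half_l1 {α : Type*} (P Q : PMF α) :
    jsFun (⇑P) (⇑Q) ≤ (1/2) * ∑' a, |(P a).toReal - (Q a).toReal| :=
  jsFun_le_half_l1_of_tsum_ne_top (by simp) (by simp)
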